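/- Let F ∈ 𝒦 with 𝔼[|F(·,e)|^{d+α}] < ∞ for all e ∈ U and some α > 0, and set β = α/2. Then for ℙ-almost every ω, for every γ with 2d < γ < 2d + β, the double integral ∫_{B_1} ∫_{B_{2d/n}(x) ∩ B_1} |g_n(y) − g_n(x)|^{d+β} / |y − x|^γ dy dx converges as n → ∞ to a finite limit. -/

import Mathlib

open MeasureTheory Filter
open scoped ENNReal

namespace RWRE7

/-- Steps of the nearest-neighbor walk: a coordinate direction and a sign.
This enumerates `U = {e ∈ ℤ^d : |e|₁ = 1}`. -/
abbrev Step (d : ℕ) := Fin d × Bool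

/-- The lattice vector corresponding to a step. -/
def vec {d : ℕ} (σ : Step d) : Fin d → ℤ :=
  fun i => if i = σ.1 then (if σ.2 then 1 else -1) else 0

/-- Position after the first `j` steps of the step sequence `s`. -/
def pos {d n : ℕ} (s : Fin n → Step d) (j : Fin n) : Fin d → ℤ :=
  ∑ k : Fin n, if (k : ℕ) < (j : ℕ) then vec (s k) else 0

/-- Class 𝒦 : measurable, `L^{d+α}` moment, mean zero, zero sum over closed loops. -/
def MemK {Ω : Type*} [MeasurableSpace Ω] (d : ℕ) (P : Measure Ω)
    (T : (Fin d → ℤ) → Ω → Ω) (F : Ω → Step d → ℝ) : Prop :=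
  (∀ σ, Measurable (fun ω => F ω σ)) ∧
  (∀ σ, ∃ α : ℝ, 0 < α ∧ Integrable (fun ω => |F ω σ| ^ ((d : ℝ) + α)) P) ∧
  (∀ σ, ∫ ω, F ω σ ∂P = 0) ∧
  (∀ ω : Ω, ∀ n : ℕ, ∀ x0 : Fin d → ℤ, ∀ s : Fin n → Step d,
    (∑ k, vec (s k)) = 0 →
    ∑ j : Fin n, F (T (x0 + pos s j) ω) (s j) = 0)

/-- `Λ(λ) = inf_{F ∈ 𝒦} ess sup_ω log Σ_e p(ω,e) exp(⟨λ,e⟩ + F(ω,e))`. -/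
noncomputable def Lam {Ω : Type*} [MeasurableSpace Ω] (d : ℕ) (P : Measure Ω)
    (T : (Fin d → ℤ) → Ω → Ω) (p : Ω → Step d → ℝ) (lam : Fin d → ℝ) : EReal :=
  ⨅ (F : Ω → Step d → ℝ) (_ : MemK d P T F),
    essSup (fun ω => ((Real.log (∑ σ : Step d,
      p ω σ * Real.exp ((∑ i, lam i * (vec σ i : ℝ)) + F ω σ))) : EReal)) P

/-- Quenched expectation `E^{P_ω}[exp⟨λ, X_n⟩]`, written as a sum over all
nearest-neighbor paths of length `n` started at the origin. -/
noncomputable def quenchedExp {Ω : Type*} (d : ℕ)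
    (T : (Fin d → ℤ) → Ω → Ω) (p : Ω → Step d → ℝ) (lam : Fin d → ℝ)
    (ω : Ω) (n : ℕ) : ℝ :=
  ∑ s : Fin n → Step d,
    Real.exp (∑ i, lam i * (((∑ k, vec (s k)) i : ℤ) : ℝ)) *
      ∏ j : Fin n, p (T (pos s j) ω) (s j)

/-- The piecewise multilinear interpolation `f̂` of `f : ℤ^d → ℝ`. -/
noncomputable def fhat {d : ℕ} (f : (Fin d → ℤ) → ℝ) (t : Fin d → ℝ) : ℝ :=
  ∑ η : Fin d → Bool,
    (∏ i, if η i then Int.fract (t i) else 1 - Int.fract (t i)) *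
      f (fun i => ⌊t i⌋ + (if η i then 1 else 0))

/-- The rescaled functions `g_n(s) = f̂(ns)/n`. -/
noncomputable def gseq {d : ℕ} (f : (Fin d → ℤ) → ℝ) (n : ℕ) (s : Fin d → ℝ) : ℝ :=
  fhat f (fun i => (n : ℝ) * s i) / n

/-- The ℓ¹ norm on `ℝ^d`. -/
def l1 {d : ℕ} (x : Fin d → ℝ) : ℝ := ∑ i, |x i|

/-!
The limit is `0`. Along each coordinate line `fhat f` is the piecewise linear interpolation of
its values at the integers, with slopes that are averages of increments of `f`; so `fhat f` is
ℓ¹-Lipschitz with constant the largest increment of `f` near the cell, and clamping `f` to a box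
makes this local. For `l1 (y - x) ≤ 2d/n` the integrand is therefore at most
`S_n(x) * l1 (y - x) ^ (p - γ)`, where `p = d + β` and `S_n(x)` sums `|F|^p ∘ T_w` over a box of
bounded size around `n x`. As `p - γ > -d`, the inner integral is `O(S_n(x) n^(-(d + p - γ)))`,
and integrating `S_n` over the unit ball gives `O(n^(-d))` times the sum of `|F|^p ∘ T_w` over a
cube of side `O(n)`. Since the `T_w` preserve `P`, the sum over `j` of `2^(-κ j)` times the sum
over the cube of side `2^j` has finite expectation when `κ > d`; so almost surely the cube sums are
`O(N^κ)` for every `κ > d`, and the double integral is `O(n^(κ - 2d - p + γ)) → 0`.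
-/

open Topology

section L1

variable {d : ℕ}

theorem l1_nonneg (x : Fin d → ℝ) : 0 ≤ l1 x :=
  Finset.sum_nonneg fun _ _ => abs_nonneg _

theorem abs_le_l1 (x : Fin d → ℝ) (i : Fin d) : |x i| ≤ l1 x :=
  Finset.single_le_sum (f := fun i => |x i|) (fun _ _ => abs_nonneg _) (Finset.mem_univ i)

theorem l1_smul (c : ℝ) (x : Fin d → ℝ) : l1 (c • x) = |c| * l1 x := by
  simp [l1, abs_mul, Finset.mul_sum]

theorem continuous_l1 : Continuous (l1 : (Fin d → ℝ) → ℝ) :=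
  continuous_finsetSum _ fun i _ => (continuous_apply i).abs

theorem norm_le_l1 (x : Fin d → ℝ) : ‖x‖ ≤ l1 x :=
  (pi_norm_le_iff_of_nonneg (l1_nonneg x)).2 fun i => abs_le_l1 x i

theorem l1_le_mul_norm (x : Fin d → ℝ) : l1 x ≤ d * ‖x‖ := by
  simpa [l1] using Finset.sum_le_sum fun i (_ : i ∈ Finset.univ) => norm_le_pi_norm x i

end L1

noncomputable def linearInterp (ψ : ℤ → ℝ) (u : ℝ) : ℝ :=
  (1 - Int.fract u) * ψ ⌊u⌋ + Int.fract u * ψ (⌊u⌋ + 1)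

section LinearInterp

variable {ψ : ℤ → ℝ} {K : ℝ}

theorem linearInterp_eq_of_mem_Icc {m : ℤ} {u : ℝ} (hu : u ∈ Set.Icc (m : ℝ) (m + 1)) :
    linearInterp ψ u = ψ m + (u - m) * (ψ (m + 1) - ψ m) := by
  rcases hu.2.lt_or_eq with hlt | rfl
  · have hfl : ⌊u⌋ = m := Int.floor_eq_iff.2 ⟨hu.1, hlt⟩
    rw [linearInterp, Int.fract, hfl]
    ring
  · rw [linearInterp, show (m : ℝ) + 1 = ((m + 1 : ℤ) : ℝ) by push_cast; ring,
      Int.fract_intCast, Int.floor_intCast]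
    push_cast
    ring

theorem abs_linearInterp_sub_le_of_mem_Icc (hψ : ∀ m, |ψ (m + 1) - ψ m| ≤ K) {m : ℤ} {u v : ℝ}
    (hu : u ∈ Set.Icc (m : ℝ) (m + 1)) (hv : v ∈ Set.Icc (m : ℝ) (m + 1)) :
    |linearInterp ψ v - linearInterp ψ u| ≤ K * |v - u| := by
  rw [linearInterp_eq_of_mem_Icc hu, linearInterp_eq_of_mem_Icc hv,
    show ψ m + (v - m) * (ψ (m + 1) - ψ m) - (ψ m + (u - m) * (ψ (m + 1) - ψ m))
      = (ψ (m + 1) - ψ m) * (v - u) by ring, abs_mul]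
  exact mul_le_mul_of_nonneg_right (hψ m) (abs_nonneg _)

theorem abs_linearInterp_sub_le (hψ : ∀ m, |ψ (m + 1) - ψ m| ≤ K) (u v : ℝ) :
    |linearInterp ψ v - linearInterp ψ u| ≤ K * |v - u| := by
  wlog huv : u ≤ v generalizing u v
  · rw [abs_sub_comm, abs_sub_comm v]
    exact this v u (le_of_not_ge huv)
  have hchain : ∀ {a b c : ℝ}, a ≤ b → b ≤ c →
      |linearInterp ψ b - linearInterp ψ a| ≤ K * |b - a| →
      |linearInterp ψ c - linearInterp ψ b| ≤ K * |c - b| →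
      |linearInterp ψ c - linearInterp ψ a| ≤ K * |c - a| := by
    intro a b c hab hbc h₁ h₂
    rw [abs_of_nonneg (sub_nonneg.2 hab)] at h₁
    rw [abs_of_nonneg (sub_nonneg.2 hbc)] at h₂
    rw [abs_of_nonneg (sub_nonneg.2 (hab.trans hbc))]
    linarith [abs_sub_le (linearInterp ψ c) (linearInterp ψ b) (linearInterp ψ a)]
  have hu : u ∈ Set.Icc (⌊u⌋ : ℝ) (⌊u⌋ + 1) := ⟨Int.floor_le u, (Int.lt_floor_add_one u).le⟩
  have hv : v ∈ Set.Icc (⌊v⌋ : ℝ) (⌊v⌋ + 1) := ⟨Int.floor_le v, (Int.lt_floor_add_one v).le⟩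
  by_cases hv' : v ≤ ⌊u⌋ + 1
  · exact abs_linearInterp_sub_le_of_mem_Icc hψ hu ⟨(Int.floor_le u).trans huv, hv'⟩
  have hright : ∀ k : ℤ, ⌊u⌋ + 1 ≤ k → u ≤ k := fun k hk =>
    (Int.lt_floor_add_one u).le.trans (by exact_mod_cast hk)
  have hint : ∀ k : ℤ, ⌊u⌋ + 1 ≤ k → |linearInterp ψ k - linearInterp ψ u| ≤ K * |k - u| := by
    intro k hk
    induction k, hk using Int.leInduction with
    | base => exact_mod_cast abs_linearInterp_sub_le_of_mem_Icc hψ hu ⟨by linarith [hu.1], le_rfl⟩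
    | succ k hk ih =>
      refine hchain (hright k hk) (by simp) ih ?_
      exact_mod_cast abs_linearInterp_sub_le_of_mem_Icc hψ (m := k) ⟨le_rfl, by linarith⟩
        ⟨by linarith, le_rfl⟩
  have hk : ⌊u⌋ + 1 ≤ ⌊v⌋ := Int.le_floor.2 (by push_cast; linarith)
  exact hchain (hright _ hk) (Int.floor_le v) (hint _ hk)
    (abs_linearInterp_sub_le_of_mem_Icc hψ ⟨le_rfl, by linarith⟩ hv)

end LinearInterp

section Fhat

variable {d : ℕ} (f : (Fin d → ℤ) → ℝ)

/-- The multilinear interpolation of `f` in the coordinates other than `i`, with the `i`-th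
coordinate fixed to the integer `k`; it equals `fhat f (Function.update t i k)`. -/
noncomputable def sliceSum (t : Fin d → ℝ) (i : Fin d) (k : ℤ) : ℝ :=
  ∑ η : {j // j ≠ i} → Bool,
    (∏ j, if η j then Int.fract (t j) else 1 - Int.fract (t j)) *
      f (fun j => if h : j = i then k else ⌊t j⌋ + if η ⟨j, h⟩ then 1 else 0)

theorem fhat_eq_sliceSum (t : Fin d → ℝ) (i : Fin d) :
    fhat f t = (1 - Int.fract (t i)) * sliceSum f t i ⌊t i⌋
      + Int.fract (t i) * sliceSum f t i (⌊t i⌋ + 1) := by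
  have hne : ∀ j : {j // j ≠ i}, (j : Fin d) ≠ i := Subtype.prop
  rw [fhat, ← (Equiv.funSplitAt i Bool).symm.sum_comp, Fintype.sum_prod_type, Fintype.sum_bool,
    sliceSum, sliceSum, Finset.mul_sum, Finset.mul_sum, add_comm]
  congr 1 <;> refine Finset.sum_congr rfl fun η _ => ?_ <;>
    rw [Fintype.prod_eq_mul_prod_subtype_ne _ i] <;>
    simp only [Equiv.funSplitAt_symm_apply, dif_pos, hne, dif_neg, not_false_eq_true,
      Bool.false_eq_true, if_true, if_false, mul_assoc] <;>
    congr 3 <;> funext j <;> split_ifs <;> simp_all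

theorem sliceSum_update (t : Fin d → ℝ) (i : Fin d) (u : ℝ) (k : ℤ) :
    sliceSum f (Function.update t i u) i k = sliceSum f t i k := by
  simp only [sliceSum]
  refine Finset.sum_congr rfl fun η _ => ?_
  congr 1
  · exact Finset.prod_congr rfl fun j _ => by rw [Function.update_of_ne j.2]
  · congr 1
    funext j
    by_cases h : j = i <;> simp [h]

theorem fhat_update_eq_linearInterp (t : Fin d → ℝ) (i : Fin d) (u : ℝ) :
    fhat f (Function.update t i u) = linearInterp (sliceSum f t i) u := by
  rw [fhat_eq_sliceSum f _ i, sliceSum_update, sliceSum_update, Function.update_self, linearInterp]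

theorem sum_prod_ite_one_sub_eq_one {ι : Type*} [Fintype ι] [DecidableEq ι] (s : ι → ℝ) :
    ∑ η : ι → Bool, ∏ j, (if η j then s j else 1 - s j) = 1 := by
  rw [← Fintype.prod_sum (fun j (b : Bool) => if b then s j else 1 - s j)]
  simp

theorem abs_sliceSum_add_one_sub_le {K : ℝ} (i : Fin d)
    (hf : ∀ z, |f (z + Pi.single i 1) - f z| ≤ K) (t : Fin d → ℝ) (k : ℤ) :
    |sliceSum f t i (k + 1) - sliceSum f t i k| ≤ K := by
  have hw : ∀ η : {j // j ≠ i} → Bool,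
      0 ≤ ∏ j, (if η j then Int.fract (t j) else 1 - Int.fract (t j)) := fun η =>
    Finset.prod_nonneg fun j _ => by
      split_ifs
      · exact Int.fract_nonneg _
      · exact sub_nonneg.2 (Int.fract_lt_one _).le
  rw [sliceSum, sliceSum, ← Finset.sum_sub_distrib]
  calc _ ≤ ∑ η : {j // j ≠ i} → Bool,
        (∏ j, (if η j then Int.fract (t j) else 1 - Int.fract (t j))) * K := by
        refine (Finset.abs_sum_le_sum_abs _ _).trans (Finset.sum_le_sum fun η _ => ?_)
        rw [← mul_sub, abs_mul, abs_of_nonneg (hw η)]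
        refine mul_le_mul_of_nonneg_left ?_ (hw η)
        have hz : (fun j => if h : j = i then k + 1 else ⌊t j⌋ + if η ⟨j, h⟩ then 1 else 0)
            = (fun j => if h : j = i then k else ⌊t j⌋ + if η ⟨j, h⟩ then 1 else 0)
              + Pi.single i 1 := by
          funext j
          by_cases h : j = i
          · subst h; simp
          · simp [h]
        rw [hz]
        exact hf _
    _ = K := by
        rw [← Finset.sum_mul, sum_prod_ite_one_sub_eq_one fun j : {j // j ≠ i} => Int.fract (t j),
          one_mul]

theorem abs_fhat_update_sub_le {K : ℝ} (i : Fin d)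
    (hf : ∀ z, |f (z + Pi.single i 1) - f z| ≤ K) (t : Fin d → ℝ) (u v : ℝ) :
    |fhat f (Function.update t i v) - fhat f (Function.update t i u)| ≤ K * |v - u| := by
  simp only [fhat_update_eq_linearInterp]
  exact abs_linearInterp_sub_le (abs_sliceSum_add_one_sub_le f i hf t) u v

end Fhat

section Lipschitz

theorem abs_sub_le_of_abs_update_sub_le {ι : Type*} [Fintype ι] [DecidableEq ι]
    {Φ : (ι → ℝ) → ℝ} {K : ℝ}
    (hΦ : ∀ t i u v, |Φ (Function.update t i v) - Φ (Function.update t i u)| ≤ K * |v - u|)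
    (t t' : ι → ℝ) :
    |Φ t' - Φ t| ≤ K * ∑ i, |t' i - t i| := by
  have key : ∀ s : Finset ι, |Φ (s.piecewise t' t) - Φ t| ≤ K * ∑ i ∈ s, |t' i - t i| := by
    intro s
    induction s using Finset.induction_on with
    | empty => simp
    | insert i s hi ih =>
      have hstep := hΦ (s.piecewise t' t) i (t i) (t' i)
      rw [Function.update_eq_self_iff.2 (Finset.piecewise_eq_of_notMem _ _ _ hi).symm] at hstep
      rw [Finset.piecewise_insert, Finset.sum_insert hi, mul_add]
      linarith [abs_sub_le (Φ (Function.update (s.piecewise t' t) i (t' i)))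
        (Φ (s.piecewise t' t)) (Φ t)]
  simpa using key Finset.univ

variable {d : ℕ} (f : (Fin d → ℤ) → ℝ)

theorem abs_fhat_sub_le {K : ℝ} (hf : ∀ z i, |f (z + Pi.single i 1) - f z| ≤ K)
    (t t' : Fin d → ℝ) : |fhat f t' - fhat f t| ≤ K * l1 (t' - t) :=
  abs_sub_le_of_abs_update_sub_le (fun t i u v => abs_fhat_update_sub_le f i (hf · i) t u v) t t'

theorem fhat_comp_clamp {a b : Fin d → ℤ} {t : Fin d → ℝ}
    (ht : ∀ i, a i ≤ ⌊t i⌋ ∧ ⌊t i⌋ + 1 ≤ b i) :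
    fhat (fun z => f (a ⊔ (b ⊓ z))) t = fhat f t := by
  refine Finset.sum_congr rfl fun η _ => ?_
  dsimp only
  congr 2
  funext i
  have := ht i
  simp only [Pi.sup_apply, Pi.inf_apply]
  split_ifs <;> omega

theorem abs_comp_clamp_add_single_sub_le {a b : Fin d → ℤ} (hab : a ≤ b) {K : ℝ}
    (hf : ∀ w ∈ Set.Icc a b, ∀ i, |f (w + Pi.single i 1) - f w| ≤ K) (z : Fin d → ℤ) (i : Fin d) :
    |f (a ⊔ (b ⊓ (z + Pi.single i 1))) - f (a ⊔ (b ⊓ z))| ≤ K := by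
  have hw : a ⊔ (b ⊓ z) ∈ Set.Icc a b := ⟨le_sup_left, sup_le hab inf_le_left⟩
  by_cases hz : a i ≤ z i ∧ z i < b i
  · have : a ⊔ (b ⊓ (z + Pi.single i 1)) = a ⊔ (b ⊓ z) + Pi.single i 1 := by
      funext j
      by_cases hj : j = i
      · subst hj; simp only [Pi.sup_apply, Pi.inf_apply, Pi.add_apply, Pi.single_eq_same]; omega
      · simp [Pi.single_eq_of_ne hj]
    rw [this]
    exact hf _ hw i
  · have : a ⊔ (b ⊓ (z + Pi.single i 1)) = a ⊔ (b ⊓ z) := by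
      funext j
      by_cases hj : j = i
      · subst hj; simp only [Pi.sup_apply, Pi.inf_apply, Pi.add_apply, Pi.single_eq_same]; omega
      · simp [Pi.single_eq_of_ne hj]
    rw [this, sub_self, abs_zero]
    exact (abs_nonneg _).trans (hf _ hw i)

theorem abs_fhat_sub_le_of_box {a b : Fin d → ℤ} (hab : a ≤ b) {K : ℝ}
    (hf : ∀ w ∈ Set.Icc a b, ∀ i, |f (w + Pi.single i 1) - f w| ≤ K) {t t' : Fin d → ℝ}
    (ht : ∀ i, a i ≤ ⌊t i⌋ ∧ ⌊t i⌋ + 1 ≤ b i) (ht' : ∀ i, a i ≤ ⌊t' i⌋ ∧ ⌊t' i⌋ + 1 ≤ b i) :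
    |fhat f t' - fhat f t| ≤ K * l1 (t' - t) := by
  rw [← fhat_comp_clamp f ht, ← fhat_comp_clamp f ht']
  exact abs_fhat_sub_le _ (abs_comp_clamp_add_single_sub_le f hab hf) t t'

end Lipschitz

section SingularIntegral

variable {d : ℕ}

theorem l1_rpow_le_mul_norm_rpow (q : ℝ) (x : Fin d → ℝ) :
    l1 x ^ q ≤ max 1 ((d : ℝ) ^ q) * ‖x‖ ^ q := by
  rcases eq_or_ne x 0 with rfl | hx
  · rcases eq_or_ne q 0 with rfl | hq
    · simp
    · simp [l1, Real.zero_rpow hq]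
  have hx' : 0 < ‖x‖ := norm_pos_iff.2 hx
  rcases le_or_gt 0 q with hq | hq
  · calc l1 x ^ q ≤ (d * ‖x‖) ^ q := Real.rpow_le_rpow (l1_nonneg x) (l1_le_mul_norm x) hq
      _ = (d : ℝ) ^ q * ‖x‖ ^ q := Real.mul_rpow (Nat.cast_nonneg d) hx'.le
      _ ≤ _ := mul_le_mul_of_nonneg_right (le_max_right _ _) (by positivity)
  · calc l1 x ^ q ≤ ‖x‖ ^ q := Real.rpow_le_rpow_of_nonpos hx' (norm_le_l1 x) hq.le
      _ ≤ _ := le_mul_of_one_le_left (by positivity) (le_max_left _ _)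

theorem setLIntegral_l1_rpow_lt_top (hd : 1 ≤ d) {q : ℝ} (hq : -(d : ℝ) < q) :
    ∫⁻ z in {z : Fin d → ℝ | l1 z ≤ 1}, ENNReal.ofReal (l1 z ^ q) < ⊤ := by
  have hint : IntegrableOn (fun z : Fin d → ℝ => l1 z ^ q) (Metric.ball 0 2) := by
    refine integrableOn_ball_of_norm_le_rpow (by simpa using hd) (C := max 1 ((d : ℝ) ^ q))
      (α := -q) (by simp; linarith) (Eventually.of_forall fun z => ?_)
      (continuous_l1.measurable.pow_const q).aestronglyMeasurable
    rw [neg_neg, Real.norm_of_nonneg (Real.rpow_nonneg (l1_nonneg z) q)]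
    exact l1_rpow_le_mul_norm_rpow q z
  refine lt_of_le_of_lt (lintegral_mono_set fun z hz => ?_) (hint.lintegral_lt_top)
  simpa using (norm_le_l1 z).trans_lt (lt_of_le_of_lt hz one_lt_two)

theorem setLIntegral_l1_sub_rpow (x : Fin d → ℝ) {r : ℝ} (hr : 0 < r) (q : ℝ) :
    ∫⁻ y in {y | l1 (y - x) ≤ r}, ENNReal.ofReal (l1 (y - x) ^ q)
      = ENNReal.ofReal (r ^ ((d : ℝ) + q)) *
          ∫⁻ z in {z : Fin d → ℝ | l1 z ≤ 1}, ENNReal.ofReal (l1 z ^ q) := by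
  have hmeas : ∀ s : ℝ, MeasurableSet {z : Fin d → ℝ | l1 z ≤ s} :=
    fun s => measurableSet_le continuous_l1.measurable measurable_const
  have hg : Measurable fun z : Fin d → ℝ => ENNReal.ofReal (l1 z ^ q) :=
    (continuous_l1.measurable.pow_const q).ennreal_ofReal
  have htrans := (measurePreserving_sub_right volume x).setLIntegral_comp_preimage (hmeas r) hg
  have hscale := setLIntegral_map (μ := volume) (hmeas r) hg (measurable_const_smul r)
  have hpre : (fun w => r • w) ⁻¹' {z : Fin d → ℝ | l1 z ≤ r} = {w | l1 w ≤ 1} := by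
    ext w
    simp [l1_smul, abs_of_pos hr, mul_le_iff_le_one_right hr]
  rw [Measure.map_addHaar_smul volume hr.ne', Measure.restrict_smul, lintegral_smul_measure,
    hpre, Module.finrank_fin_fun, smul_eq_mul, abs_of_pos (by positivity)] at hscale
  simp_rw [l1_smul, abs_of_pos hr, Real.mul_rpow hr.le (l1_nonneg _),
    ENNReal.ofReal_mul (Real.rpow_nonneg hr.le q)] at hscale
  rw [lintegral_const_mul' _ _ ENNReal.ofReal_ne_top] at hscale
  rw [show {y | l1 (y - x) ≤ r} = (· - x) ⁻¹' {z | l1 z ≤ r} from rfl, htrans]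
  have hrd : ENNReal.ofReal (r ^ d) * ENNReal.ofReal (r ^ d)⁻¹ = 1 := by
    rw [← ENNReal.ofReal_mul (by positivity), mul_inv_cancel₀ (by positivity), ENNReal.ofReal_one]
  rw [← one_mul (∫⁻ z in {z | l1 z ≤ r}, _), ← hrd, mul_assoc, hscale, ← mul_assoc,
    ← ENNReal.ofReal_mul (by positivity), Real.rpow_add hr, Real.rpow_natCast]

end SingularIntegral

noncomputable def cube (d N : ℕ) : Finset (Fin d → ℤ) :=
  Fintype.piFinset fun _ => Finset.Icc (-(N : ℤ)) N

section Growth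

variable {d : ℕ}

theorem card_cube (N : ℕ) : (cube d N).card = (2 * N + 1) ^ d := by
  rw [cube, Fintype.card_piFinset, Int.card_Icc, Finset.prod_const, Finset.card_univ,
    Fintype.card_fin]
  congr 1
  omega

theorem cube_mono {N N' : ℕ} (h : N ≤ N') : cube d N ⊆ cube d N' :=
  Fintype.piFinset_subset _ _ fun _ => Finset.Icc_subset_Icc (by omega) (by omega)

theorem card_cube_two_pow_le (j : ℕ) : (cube d (2 ^ j)).card ≤ 3 ^ d * (2 ^ d) ^ j := by
  rw [card_cube, ← pow_mul, mul_comm d j, pow_mul, ← mul_pow]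
  exact Nat.pow_le_pow_left (by linarith [Nat.one_le_two_pow (n := j)]) d

theorem sum_cube_le_of_tsum_lt_top {a : (Fin d → ℤ) → ℝ} (ha : ∀ z, 0 ≤ a z) {κ : ℝ}
    (hκ : 0 ≤ κ)
    (hW : ∑' j, ENNReal.ofReal ((2 : ℝ) ^ (-κ)) ^ j *
      ∑ z ∈ cube d (2 ^ j), ENNReal.ofReal (a z) ≠ ⊤) :
    ∃ M : ℝ, ∀ N : ℕ, ∑ z ∈ cube d N, a z ≤ M * ((N : ℝ) + 1) ^ κ := by
  set ρ : ℝ := (2 : ℝ) ^ (-κ) with hρ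
  set W := ∑' j, ENNReal.ofReal ρ ^ j * ∑ z ∈ cube d (2 ^ j), ENNReal.ofReal (a z)
  refine ⟨W.toReal * 2 ^ κ, fun N => ?_⟩
  set j := Nat.log 2 N + 1
  have hj : (∑ z ∈ cube d (2 ^ j), a z) * ρ ^ j ≤ W.toReal := by
    rw [mul_comm, ← Finset.sum_congr rfl fun z _ => ENNReal.toReal_ofReal (ha z),
      ← ENNReal.toReal_sum fun _ _ => ENNReal.ofReal_ne_top, ← ENNReal.toReal_ofReal (by positivity : (0 : ℝ) ≤ ρ),
      ← ENNReal.toReal_pow, ← ENNReal.toReal_mul]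
    exact ENNReal.toReal_mono hW (ENNReal.le_tsum (f := fun j =>
      ENNReal.ofReal ρ ^ j * ∑ z ∈ cube d (2 ^ j), ENNReal.ofReal (a z)) j)
  have hρj : (ρ ^ j)⁻¹ ≤ 2 ^ κ * ((N : ℝ) + 1) ^ κ := by
    have h2j : (2 : ℝ) ^ j ≤ 2 * ((N : ℝ) + 1) := by
      have : (2 : ℝ) ^ Nat.log 2 N ≤ N + 1 := by exact_mod_cast Nat.pow_log_le_add_one 2 N
      rw [pow_succ]
      linarith
    rw [hρ, ← Real.rpow_natCast, ← Real.rpow_mul two_pos.le, ← Real.rpow_neg two_pos.le,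
      ← Real.mul_rpow two_pos.le (by positivity), neg_mul, neg_neg, mul_comm,
      Real.rpow_mul two_pos.le, Real.rpow_natCast]
    exact Real.rpow_le_rpow (by positivity) h2j hκ
  calc ∑ z ∈ cube d N, a z ≤ ∑ z ∈ cube d (2 ^ j), a z :=
        Finset.sum_le_sum_of_subset_of_nonneg
          (cube_mono (Nat.lt_pow_succ_log_self one_lt_two N).le) fun _ _ _ => ha _
    _ = (∑ z ∈ cube d (2 ^ j), a z) * ρ ^ j * (ρ ^ j)⁻¹ := by
        rw [mul_inv_cancel_right₀ (by positivity)]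
    _ ≤ W.toReal * (2 ^ κ * ((N : ℝ) + 1) ^ κ) :=
        mul_le_mul hj hρj (by positivity) ENNReal.toReal_nonneg
    _ = _ := by ring

variable {Ω : Type*} [MeasurableSpace Ω] {P : Measure Ω} {T : (Fin d → ℤ) → Ω → Ω}
  {G : Ω → ℝ}

theorem lintegral_sum_comp_eq_card_mul (hT : ∀ z, MeasurePreserving (T z) P P)
    (hGm : Measurable G) (s : Finset (Fin d → ℤ)) :
    ∫⁻ ω, ∑ z ∈ s, ENNReal.ofReal (G (T z ω)) ∂P = s.card * ∫⁻ ω, ENNReal.ofReal (G ω) ∂P := by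
  rw [lintegral_finsetSum' (f := fun z ω => ENNReal.ofReal (G (T z ω))) _
    fun z _ => (hGm.comp (hT z).measurable).ennreal_ofReal.aemeasurable]
  simp_rw [(hT _).lintegral_comp (f := fun ω => ENNReal.ofReal (G ω)) hGm.ennreal_ofReal]
  rw [Finset.sum_const, nsmul_eq_mul]

theorem ae_tsum_sum_cube_lt_top (hT : ∀ z, MeasurePreserving (T z) P P) (hGm : Measurable G)
    (hG : Integrable G P) {κ : ℝ} (hκ : (d : ℝ) < κ) :
    ∀ᵐ ω ∂P, ∑' j, ENNReal.ofReal ((2 : ℝ) ^ (-κ)) ^ j *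
      ∑ z ∈ cube d (2 ^ j), ENNReal.ofReal (G (T z ω)) < ⊤ := by
  set I := ∫⁻ ω, ENNReal.ofReal (G ω) ∂P
  set ρ := ENNReal.ofReal ((2 : ℝ) ^ (-κ)) with hρ
  have hm : ∀ j, Measurable fun ω => ∑ z ∈ cube d (2 ^ j), ENNReal.ofReal (G (T z ω)) :=
    fun j => Finset.measurable_sum _ fun z _ => (hGm.comp (hT z).measurable).ennreal_ofReal
  refine ae_lt_top' (Measurable.tsum fun j => (hm j).const_mul _).aemeasurable ?_
  have hratio : (2 : ℝ≥0∞) ^ d * ρ < 1 := by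
    rw [hρ, ← ENNReal.ofReal_ofNat, ← ENNReal.ofReal_pow (by norm_num), ← ENNReal.ofReal_mul
      (by positivity), ← ENNReal.ofReal_one, ENNReal.ofReal_lt_ofReal_iff one_pos,
      ← Real.rpow_natCast, ← Real.rpow_add two_pos]
    exact Real.rpow_lt_one_of_one_lt_of_neg one_lt_two (by linarith)
  have hbound : ∫⁻ ω, ∑' j, ρ ^ j * ∑ z ∈ cube d (2 ^ j), ENNReal.ofReal (G (T z ω)) ∂P
      ≤ 3 ^ d * I * (1 - (2 : ℝ≥0∞) ^ d * ρ)⁻¹ := calc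
    _ = ∑' j, ρ ^ j * ((cube d (2 ^ j)).card * I) := by
      rw [lintegral_tsum fun j => ((hm j).const_mul _).aemeasurable]
      simp_rw [lintegral_const_mul _ (hm _), lintegral_sum_comp_eq_card_mul hT hGm]
      rfl
    _ ≤ ∑' j, 3 ^ d * I * ((2 : ℝ≥0∞) ^ d * ρ) ^ j := by
      refine ENNReal.tsum_le_tsum fun j => ?_
      calc ρ ^ j * ((cube d (2 ^ j)).card * I)
          ≤ ρ ^ j * ((3 ^ d * (2 ^ d) ^ j : ℕ) * I) := by
            gcongr
            exact_mod_cast card_cube_two_pow_le j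
        _ = _ := by push_cast; ring
    _ = 3 ^ d * I * (1 - (2 : ℝ≥0∞) ^ d * ρ)⁻¹ := by
      rw [ENNReal.tsum_mul_left, ENNReal.tsum_geometric]
  exact ne_top_of_le_ne_top (ENNReal.mul_ne_top (ENNReal.mul_ne_top (by simp)
    hG.lintegral_lt_top.ne) (ENNReal.inv_ne_top.2 (tsub_pos_of_lt hratio).ne')) hbound

theorem ae_sum_cube_le (hT : ∀ z, MeasurePreserving (T z) P P) (hG0 : ∀ ω, 0 ≤ G ω)
    (hGm : Measurable G) (hG : Integrable G P) {κ : ℝ} (hκ : (d : ℝ) < κ) :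
    ∀ᵐ ω ∂P, ∃ M : ℝ, ∀ N : ℕ, ∑ z ∈ cube d N, G (T z ω) ≤ M * ((N : ℝ) + 1) ^ κ := by
  filter_upwards [ae_tsum_sum_cube_lt_top hT hGm hG hκ] with ω hω
  exact sum_cube_le_of_tsum_lt_top (fun z => hG0 (T z ω)) ((Nat.cast_nonneg d).trans hκ.le) hω.ne

end Growth

noncomputable def latticeBox {d : ℕ} (c : ℕ) (t : Fin d → ℝ) : Finset (Fin d → ℤ) :=
  Fintype.piFinset fun i => Finset.Icc (⌊t i⌋ - c) (⌊t i⌋ + c)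

section Rescaled

variable {d : ℕ} {f : (Fin d → ℤ) → ℝ} {h : (Fin d → ℤ) → ℝ} {p : ℝ}

theorem abs_floor_sub_floor_le {a b : ℝ} {c : ℕ} (hab : |a - b| ≤ c) :
    |⌊a⌋ - ⌊b⌋| ≤ c := by
  have := abs_le.1 hab
  refine abs_le.2 ⟨?_, ?_⟩
  · rw [neg_le_sub_iff_le_add, ← Int.floor_add_natCast]; exact Int.floor_mono (by linarith)
  · rw [sub_le_iff_le_add', ← Int.floor_add_natCast]; exact Int.floor_mono (by linarith)

theorem abs_gseq_sub_le {K : ℝ} {c n : ℕ} (hn : 0 < n) {x y : Fin d → ℝ}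
    (hf : ∀ w ∈ latticeBox (c + 1) ((n : ℝ) • x), ∀ i, |f (w + Pi.single i 1) - f w| ≤ K)
    (hxy : l1 (y - x) ≤ c / n) :
    |gseq f n y - gseq f n x| ≤ K * l1 (y - x) := by
  have hnR : (0 : ℝ) < n := by exact_mod_cast hn
  set a : Fin d → ℤ := fun i => ⌊(n : ℝ) * x i⌋ - (c + 1 : ℕ)
  set b : Fin d → ℤ := fun i => ⌊(n : ℝ) * x i⌋ + (c + 1 : ℕ)
  have hbox : ∀ w ∈ Set.Icc a b, w ∈ latticeBox (c + 1) ((n : ℝ) • x) := fun w hw => by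
    simp only [latticeBox, Fintype.mem_piFinset, Finset.mem_Icc, Pi.smul_apply, smul_eq_mul]
    exact fun j => ⟨hw.1 j, hw.2 j⟩
  have hcell : ∀ t : Fin d → ℝ, (∀ i, |t i - n * x i| ≤ c) →
      ∀ i, a i ≤ ⌊t i⌋ ∧ ⌊t i⌋ + 1 ≤ b i := by
    intro t ht i
    have := abs_le.1 (abs_floor_sub_floor_le (ht i))
    simp only [a, b]
    push_cast
    omega
  have hy : ∀ i, |(n : ℝ) * y i - n * x i| ≤ c := fun i => by
    rw [← mul_sub, abs_mul, abs_of_pos hnR]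
    calc (n : ℝ) * |y i - x i| ≤ n * (c / n) := by
          gcongr
          exact (abs_le_l1 (y - x) i).trans hxy
      _ = c := by field_simp
  have hlip := abs_fhat_sub_le_of_box f (fun i => by simp [a, b]; omega)
    (fun w hw => hf w (hbox w hw))
    (hcell (fun i => (n : ℝ) * x i) fun i => by simp) (hcell (fun i => (n : ℝ) * y i) hy)
  have hl1 : l1 ((fun i => (n : ℝ) * y i) - fun i => (n : ℝ) * x i) = n * l1 (y - x) := by
    rw [← abs_of_pos hnR, ← l1_smul]
    congr 1
    funext i
    simp [mul_sub]
  rw [gseq, gseq, ← sub_div, abs_div, abs_of_pos hnR, div_le_iff₀ hnR]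
  calc _ ≤ K * l1 ((fun i => (n : ℝ) * y i) - fun i => (n : ℝ) * x i) := hlip
    _ = _ := by rw [hl1]; ring

theorem abs_gseq_sub_rpow_le (hp : 0 < p) (hh : ∀ w, 0 ≤ h w)
    (hf : ∀ w i, |f (w + Pi.single i 1) - f w| ^ p ≤ h w) {c n : ℕ} (hn : 0 < n)
    {x y : Fin d → ℝ} (hxy : l1 (y - x) ≤ c / n) :
    |gseq f n y - gseq f n x| ^ p
      ≤ (∑ w ∈ latticeBox (c + 1) ((n : ℝ) • x), h w) * l1 (y - x) ^ p := by
  set S := ∑ w ∈ latticeBox (c + 1) ((n : ℝ) • x), h w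
  have hS : 0 ≤ S := Finset.sum_nonneg fun w _ => hh w
  have hincr : ∀ w ∈ latticeBox (c + 1) ((n : ℝ) • x), ∀ i,
      |f (w + Pi.single i 1) - f w| ≤ S ^ p⁻¹ := fun w hw i =>
    (Real.le_rpow_inv_iff_of_pos (abs_nonneg _) hS hp).2
      ((hf w i).trans (Finset.single_le_sum (fun w _ => hh w) hw))
  calc |gseq f n y - gseq f n x| ^ p ≤ (S ^ p⁻¹ * l1 (y - x)) ^ p :=
        Real.rpow_le_rpow (abs_nonneg _) (abs_gseq_sub_le hn hincr hxy) hp.le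
    _ = S * l1 (y - x) ^ p := by
        rw [Real.mul_rpow (by positivity) (l1_nonneg _), Real.rpow_inv_rpow hS hp.ne']

theorem setLIntegral_gseq_le (hp : 0 < p) (hh : ∀ w, 0 ≤ h w)
    (hf : ∀ w i, |f (w + Pi.single i 1) - f w| ^ p ≤ h w) {c n : ℕ} (hc : 0 < c) (hn : 0 < n)
    (γ : ℝ) (x : Fin d → ℝ) :
    ∫⁻ y in {y | l1 (y - x) ≤ c / n} ∩ {y | l1 y ≤ 1},
        ENNReal.ofReal (|gseq f n y - gseq f n x| ^ p / l1 (y - x) ^ γ)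
      ≤ ENNReal.ofReal (∑ w ∈ latticeBox (c + 1) ((n : ℝ) • x), h w) *
          (ENNReal.ofReal (((c : ℝ) / n) ^ ((d : ℝ) + (p - γ))) *
            ∫⁻ z in {z : Fin d → ℝ | l1 z ≤ 1}, ENNReal.ofReal (l1 z ^ (p - γ))) := by
  set S := ∑ w ∈ latticeBox (c + 1) ((n : ℝ) • x), h w
  have hS : 0 ≤ S := Finset.sum_nonneg fun w _ => hh w
  have hpt : ∀ y ∈ {y | l1 (y - x) ≤ c / n},
      ENNReal.ofReal (|gseq f n y - gseq f n x| ^ p / l1 (y - x) ^ γ)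
        ≤ ENNReal.ofReal S * ENNReal.ofReal (l1 (y - x) ^ (p - γ)) := by
    intro y hy
    have hbound := abs_gseq_sub_rpow_le hp hh hf hn hy
    rw [← ENNReal.ofReal_mul hS]
    refine ENNReal.ofReal_le_ofReal ?_
    rcases (l1_nonneg (y - x)).eq_or_lt with h0 | h0
    · rw [← h0, Real.zero_rpow hp.ne', mul_zero] at hbound
      rw [le_antisymm hbound (by positivity), zero_div]
      positivity
    · rw [Real.rpow_sub h0]
      calc _ ≤ S * l1 (y - x) ^ p / l1 (y - x) ^ γ := by gcongr
        _ = _ := by ring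
  have hmeas : MeasurableSet {y : Fin d → ℝ | l1 (y - x) ≤ c / n} :=
    measurableSet_le (continuous_l1.comp (continuous_sub_right x)).measurable measurable_const
  calc _ ≤ ∫⁻ y in {y | l1 (y - x) ≤ c / n},
          ENNReal.ofReal (|gseq f n y - gseq f n x| ^ p / l1 (y - x) ^ γ) :=
        lintegral_mono_set Set.inter_subset_left
    _ ≤ ∫⁻ y in {y | l1 (y - x) ≤ c / n},
          ENNReal.ofReal S * ENNReal.ofReal (l1 (y - x) ^ (p - γ)) := setLIntegral_mono' hmeas hpt
    _ = _ := by
        rw [lintegral_const_mul' _ _ ENNReal.ofReal_ne_top,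
          setLIntegral_l1_sub_rpow x (by positivity)]


theorem latticeBox_subset_cube {c n : ℕ} {x : Fin d → ℝ} (hx : l1 x ≤ 1) :
    latticeBox c ((n : ℝ) • x) ⊆ cube d (n + c) := by
  intro w hw
  simp only [latticeBox, cube, Fintype.mem_piFinset, Finset.mem_Icc, Pi.smul_apply,
    smul_eq_mul] at hw ⊢
  intro i
  have hxi := abs_le.1 ((abs_le_l1 x i).trans hx)
  have hlo : -(n : ℤ) ≤ ⌊(n : ℝ) * x i⌋ := Int.le_floor.2 (by push_cast; nlinarith)
  have hhi : ⌊(n : ℝ) * x i⌋ ≤ n := Int.floor_le_iff.2 (by push_cast; nlinarith)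
  have := hw i
  push_cast
  omega

theorem volume_setOf_mem_latticeBox_le (c : ℕ) {n : ℕ} (hn : 0 < n) (w : Fin d → ℤ) :
    volume {x : Fin d → ℝ | w ∈ latticeBox c ((n : ℝ) • x)}
      ≤ ENNReal.ofReal ((((2 * c + 1 : ℕ) : ℝ) / n) ^ d) := by
  have hnR : (0 : ℝ) < n := by exact_mod_cast hn
  have hsub : {x : Fin d → ℝ | w ∈ latticeBox c ((n : ℝ) • x)}
      ⊆ Set.Icc (fun i => ((w i : ℝ) - c) / n) (fun i => ((w i : ℝ) + c + 1) / n) := by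
    intro x hx
    simp only [Set.mem_ofPred_eq, latticeBox, Fintype.mem_piFinset, Finset.mem_Icc,
      Pi.smul_apply, smul_eq_mul] at hx
    refine ⟨fun i => ?_, fun i => ?_⟩
    · have : ((w i - c : ℤ) : ℝ) ≤ n * x i := Int.le_floor.1 (by linarith [(hx i).2])
      push_cast at this
      rw [div_le_iff₀ hnR]
      linarith
    · have : (n : ℝ) * x i < ((w i + c : ℤ) : ℝ) + 1 := Int.floor_le_iff.1 (by linarith [(hx i).1])
      push_cast at this
      rw [le_div_iff₀ hnR]
      linarith
  refine (measure_mono hsub).trans_eq ?_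
  have hlen : ∀ i, ((w i : ℝ) + c + 1) / n - ((w i : ℝ) - c) / n = ((2 * c + 1 : ℕ) : ℝ) / n :=
    fun i => by push_cast; ring
  simp_rw [Real.volume_Icc_pi, hlen]
  rw [Finset.prod_const, Finset.card_univ, Fintype.card_fin,
    ← ENNReal.ofReal_pow (by positivity)]


theorem measurable_floor_smul (n : ℕ) :
    Measurable fun x : Fin d → ℝ => fun i => ⌊((n : ℝ) • x) i⌋ :=
  measurable_pi_lambda _ fun i => ((measurable_pi_apply i).comp (measurable_const_smul _)).floor

theorem measurableSet_setOf_mem_latticeBox (c n : ℕ) (w : Fin d → ℤ) :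
    MeasurableSet {x : Fin d → ℝ | w ∈ latticeBox c ((n : ℝ) • x)} :=
  measurable_floor_smul n (MeasurableSet.of_discrete (s := {v : Fin d → ℤ |
    w ∈ Fintype.piFinset fun i => Finset.Icc (v i - c) (v i + c)}))

theorem measurable_sum_latticeBox (c n : ℕ) :
    Measurable fun x : Fin d → ℝ => ENNReal.ofReal (∑ w ∈ latticeBox c ((n : ℝ) • x), h w) :=
  (Measurable.of_discrete (f := fun v : Fin d → ℤ => ENNReal.ofReal
    (∑ w ∈ Fintype.piFinset fun i => Finset.Icc (v i - c) (v i + c), h w))).comp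
      (measurable_floor_smul n)

theorem setLIntegral_sum_latticeBox_le (hh : ∀ w, 0 ≤ h w) (c : ℕ) {n : ℕ} (hn : 0 < n) :
    ∫⁻ x in {x : Fin d → ℝ | l1 x ≤ 1}, ENNReal.ofReal (∑ w ∈ latticeBox c ((n : ℝ) • x), h w)
      ≤ ENNReal.ofReal ((((2 * c + 1 : ℕ) : ℝ) / n) ^ d) *
          ENNReal.ofReal (∑ w ∈ cube d (n + c), h w) := by
  classical
  set E : (Fin d → ℤ) → Set (Fin d → ℝ) := fun w => {x | w ∈ latticeBox c ((n : ℝ) • x)}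
  have hpt : ∀ x ∈ {x : Fin d → ℝ | l1 x ≤ 1},
      ENNReal.ofReal (∑ w ∈ latticeBox c ((n : ℝ) • x), h w)
        = ∑ w ∈ cube d (n + c), (E w).indicator (fun _ => ENNReal.ofReal (h w)) x := by
    intro x hx
    simp only [Set.indicator_apply, E, Set.mem_ofPred_eq]
    rw [Finset.sum_ite_mem, Finset.inter_eq_right.2 (latticeBox_subset_cube hx),
      ENNReal.ofReal_sum_of_nonneg fun w _ => hh w]
  calc _ = ∫⁻ x in {x : Fin d → ℝ | l1 x ≤ 1},
          ∑ w ∈ cube d (n + c), (E w).indicator (fun _ => ENNReal.ofReal (h w)) x :=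
        setLIntegral_congr_fun (measurableSet_le continuous_l1.measurable measurable_const) hpt
    _ ≤ ∫⁻ x, ∑ w ∈ cube d (n + c), (E w).indicator (fun _ => ENNReal.ofReal (h w)) x :=
        setLIntegral_le_lintegral _ _
    _ = ∑ w ∈ cube d (n + c), ENNReal.ofReal (h w) * volume (E w) := by
        rw [lintegral_finsetSum _ fun w _ =>
          measurable_const.indicator (measurableSet_setOf_mem_latticeBox c n w)]
        exact Finset.sum_congr rfl fun w _ =>
          lintegral_indicator_const (measurableSet_setOf_mem_latticeBox c n w) _
    _ ≤ ∑ w ∈ cube d (n + c), ENNReal.ofReal (h w) *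
          ENNReal.ofReal ((((2 * c + 1 : ℕ) : ℝ) / n) ^ d) :=
        Finset.sum_le_sum fun w _ => by gcongr; exact volume_setOf_mem_latticeBox_le c hn w
    _ = _ := by
        rw [← Finset.sum_mul, ← ENNReal.ofReal_sum_of_nonneg fun w _ => hh w, mul_comm]


theorem tendsto_rpow_bound_zero {s κ M : ℝ} {B R c : ℕ} (hκ : κ < s + d) :
    Tendsto (fun n : ℕ => ((c : ℝ) / n) ^ s * (((B : ℝ) / n) ^ d * (M * ((n : ℝ) + R + 1) ^ κ)))
      atTop (𝓝 0) := by
  have hratio : Tendsto (fun n : ℕ => (((n : ℝ) + R + 1) / n) ^ κ) atTop (𝓝 1) := by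
    have : Tendsto (fun n : ℕ => 1 + ((R : ℝ) + 1) / n) atTop (𝓝 1) := by
      simpa using (tendsto_const_div_atTop_nhds_zero_nat ((R : ℝ) + 1)).const_add 1
    simpa using (this.congr' ((eventually_gt_atTop 0).mono fun n hn => by
      field_simp; ring)).rpow_const (Or.inl one_ne_zero)
  have hdecay : Tendsto (fun n : ℕ => (n : ℝ) ^ (-(s + d - κ))) atTop (𝓝 0) :=
    (tendsto_rpow_neg_atTop (by linarith)).comp tendsto_natCast_atTop_atTop
  have := ((hratio.const_mul ((c : ℝ) ^ s * (B : ℝ) ^ d * M)).mul hdecay)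
  rw [mul_zero] at this
  refine this.congr' ((eventually_gt_atTop 0).mono fun n hn => ?_)
  have hn : (0 : ℝ) < n := by exact_mod_cast hn
  dsimp only
  rw [Real.div_rpow (Nat.cast_nonneg _) hn.le, Real.div_rpow (by positivity) hn.le, div_pow,
    Real.rpow_neg hn.le, Real.rpow_sub hn, Real.rpow_add hn, Real.rpow_natCast]
  field_simp


theorem lintegral_gseq_le (hp : 0 < p) (hh : ∀ w, 0 ≤ h w)
    (hf : ∀ w i, |f (w + Pi.single i 1) - f w| ^ p ≤ h w) {c n : ℕ} (hc : 0 < c) (hn : 0 < n)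
    {γ κ M : ℝ} (hM : ∀ N : ℕ, ∑ w ∈ cube d N, h w ≤ M * ((N : ℝ) + 1) ^ κ) :
    ∫⁻ x in {x : Fin d → ℝ | l1 x ≤ 1},
        ∫⁻ y in {y : Fin d → ℝ | l1 (y - x) ≤ c / n} ∩ {y : Fin d → ℝ | l1 y ≤ 1},
          ENNReal.ofReal (|gseq f n y - gseq f n x| ^ p / l1 (y - x) ^ γ)
      ≤ (∫⁻ z in {z : Fin d → ℝ | l1 z ≤ 1}, ENNReal.ofReal (l1 z ^ (p - γ))) *
          ENNReal.ofReal (((c : ℝ) / n) ^ ((d : ℝ) + (p - γ)) *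
            ((((2 * (c + 1) + 1 : ℕ) : ℝ) / n) ^ d * (M * ((n : ℝ) + (c + 1 : ℕ) + 1) ^ κ))) := by
  set s := (d : ℝ) + (p - γ)
  set J := ∫⁻ z in {z : Fin d → ℝ | l1 z ≤ 1}, ENNReal.ofReal (l1 z ^ (p - γ))
  calc _ ≤ ∫⁻ x in {x : Fin d → ℝ | l1 x ≤ 1},
          ENNReal.ofReal (∑ w ∈ latticeBox (c + 1) ((n : ℝ) • x), h w) *
            (ENNReal.ofReal (((c : ℝ) / n) ^ s) * J) :=
        lintegral_mono fun x => setLIntegral_gseq_le hp hh hf hc hn γ x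
    _ = (∫⁻ x in {x : Fin d → ℝ | l1 x ≤ 1},
          ENNReal.ofReal (∑ w ∈ latticeBox (c + 1) ((n : ℝ) • x), h w)) *
            (ENNReal.ofReal (((c : ℝ) / n) ^ s) * J) :=
        lintegral_mul_const _ (measurable_sum_latticeBox (c + 1) n)
    _ ≤ ENNReal.ofReal ((((2 * (c + 1) + 1 : ℕ) : ℝ) / n) ^ d) *
          ENNReal.ofReal (M * ((n : ℝ) + (c + 1 : ℕ) + 1) ^ κ) *
            (ENNReal.ofReal (((c : ℝ) / n) ^ s) * J) := by
        gcongr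
        refine (setLIntegral_sum_latticeBox_le hh (c + 1) hn).trans ?_
        gcongr
        exact_mod_cast hM (n + (c + 1))
    _ = _ := by
        rw [ENNReal.ofReal_mul (by positivity : (0 : ℝ) ≤ ((c : ℝ) / n) ^ s),
          ENNReal.ofReal_mul (by positivity : (0 : ℝ) ≤ (((2 * (c + 1) + 1 : ℕ) : ℝ) / n) ^ d)]
        ring

theorem tendsto_lintegral_gseq_zero (hd : 1 ≤ d) (hp : 0 < p) (hh : ∀ w, 0 ≤ h w)
    (hf : ∀ w i, |f (w + Pi.single i 1) - f w| ^ p ≤ h w) {c : ℕ} (hc : 0 < c) {γ κ M : ℝ}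
    (hγ : γ < d + p) (hκ : κ < 2 * d + p - γ)
    (hM : ∀ N : ℕ, ∑ w ∈ cube d N, h w ≤ M * ((N : ℝ) + 1) ^ κ) :
    Tendsto (fun n : ℕ =>
      ∫⁻ x in {x : Fin d → ℝ | l1 x ≤ 1},
        ∫⁻ y in {y : Fin d → ℝ | l1 (y - x) ≤ c / n} ∩ {y : Fin d → ℝ | l1 y ≤ 1},
          ENNReal.ofReal (|gseq f n y - gseq f n x| ^ p / l1 (y - x) ^ γ))
      atTop (𝓝 0) := by
  have hJ := (setLIntegral_l1_rpow_lt_top hd (show -(d : ℝ) < p - γ by linarith)).ne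
  have hupper := ENNReal.Tendsto.const_mul (ENNReal.tendsto_ofReal
    (tendsto_rpow_bound_zero (d := d) (s := (d : ℝ) + (p - γ)) (M := M) (B := 2 * (c + 1) + 1)
      (R := c + 1) (c := c) (κ := κ) (by linarith))) (Or.inr hJ)
  rw [ENNReal.ofReal_zero, mul_zero] at hupper
  exact tendsto_of_tendsto_of_tendsto_of_le_of_le' tendsto_const_nhds hupper
    (Eventually.of_forall fun n => zero_le)
    ((eventually_gt_atTop 0).mono fun n hn => lintegral_gseq_le hp hh hf hc hn hM)

end Rescaled

theorem vec_mk_true {d : ℕ} (i : Fin d) : vec ((i, true) : Step d) = Pi.single i 1 := by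
  funext j
  simp [vec, Pi.single_apply]

theorem integrable_abs_rpow_of_le {Ω : Type*} [MeasurableSpace Ω] {P : Measure Ω}
    [IsFiniteMeasure P] {X : Ω → ℝ} (hX : Measurable X) {p r : ℝ} (hp : 0 ≤ p) (hpr : p ≤ r)
    (hr : Integrable (fun ω => |X ω| ^ r) P) : Integrable (fun ω => |X ω| ^ p) P := by
  refine ((integrable_const 1).add hr).mono' (hX.abs.pow_const p).aestronglyMeasurable
    (Eventually.of_forall fun ω => ?_)
  rw [Real.norm_of_nonneg (by positivity)]
  show |X ω| ^ p ≤ 1 + |X ω| ^ r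
  rcases le_total |X ω| 1 with h | h
  · linarith [Real.rpow_le_one (abs_nonneg (X ω)) h hp, Real.rpow_nonneg (abs_nonneg (X ω)) r]
  · linarith [Real.rpow_le_rpow_of_exponent_le h hpr]

theorem statement7_general {Ω : Type*} [MeasurableSpace Ω] (d : ℕ) (hd : 1 ≤ d)
    (P : Measure Ω) [IsProbabilityMeasure P]
    (T : (Fin d → ℤ) → Ω → Ω)
    (hTmp : ∀ x, MeasurePreserving (T x) P P)
    (F : Ω → Step d → ℝ) (hF : MemK d P T F)
    (α : ℝ) (hα : 0 < α)
    (hFmom : ∀ σ, Integrable (fun ω => |F ω σ| ^ ((d : ℝ) + α)) P)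
    :
    ∀ᵐ ω ∂P, ∀ f : (Fin d → ℤ) → ℝ,
      f 0 = 0 → (∀ z σ, f (z + vec σ) = f z + F (T z ω) σ) →
      ∀ γ : ℝ, 2 * d < γ → γ < 2 * d + α / 2 →
      ∃ c : ℝ≥0∞, c ≠ ⊤ ∧
        Tendsto (fun n : ℕ =>
          ∫⁻ x in {x : Fin d → ℝ | l1 x ≤ 1},
            ∫⁻ y in {y : Fin d → ℝ | l1 (y - x) ≤ 2 * d / n} ∩ {y : Fin d → ℝ | l1 y ≤ 1},
              ENNReal.ofReal
                (|gseq f n y - gseq f n x| ^ ((d : ℝ) + α / 2) / l1 (y - x) ^ γ))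
          atTop (nhds c) := by
  set p := (d : ℝ) + α / 2 with hp_def
  have hp : 0 < p := by positivity
  have hpα : p ≤ d + α := by linarith
  set G : Ω → ℝ := fun ω => ∑ σ, |F ω σ| ^ p
  have hG : Integrable G P := integrable_finsetSum _ fun σ _ =>
    integrable_abs_rpow_of_le (hF.1 σ) hp.le hpα (hFmom σ)
  have hgrowth : ∀ᵐ ω ∂P, ∀ k : ℕ, ∃ M : ℝ, ∀ N : ℕ,
      ∑ z ∈ cube d N, G (T z ω) ≤ M * ((N : ℝ) + 1) ^ ((d : ℝ) + 1 / (k + 1)) :=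
    ae_all_iff.2 fun k => ae_sum_cube_le hTmp (fun ω => Finset.sum_nonneg fun σ _ => by positivity)
      (Finset.measurable_sum _ fun σ _ => (hF.1 σ).abs.pow_const p) hG (by simp; positivity)
  filter_upwards [hgrowth] with ω hω f _ hf γ _ hγ
  obtain ⟨k, hk⟩ := exists_nat_one_div_lt (show 0 < (d : ℝ) + p - γ by linarith)
  obtain ⟨M, hM⟩ := hω k
  have hincr : ∀ w i, |f (w + Pi.single i 1) - f w| ^ p ≤ G (T w ω) := fun w i => by
    rw [← vec_mk_true, hf, add_sub_cancel_left]
    exact Finset.single_le_sum (f := fun σ => |F (T w ω) σ| ^ p) (fun σ _ => by positivity)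
      (Finset.mem_univ _)
  refine ⟨0, ENNReal.zero_ne_top, ?_⟩
  have := tendsto_lintegral_gseq_zero hd hp (fun w => by positivity) hincr
    (c := 2 * d) (γ := γ) (by omega) (by linarith) (by linarith) hM
  push_cast at this
  exact this

theorem statement7 {Ω : Type*} [MeasurableSpace Ω] (d : ℕ) (hd : 1 ≤ d)
    (P : Measure Ω) [IsProbabilityMeasure P]
    (T : (Fin d → ℤ) → Ω → Ω)
    (hT0 : T 0 = id)
    (hTadd : ∀ x y, T (x + y) = T x ∘ T y)
    (hTmeas : ∀ x, Measurable (T x))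
    (hTmp : ∀ x, MeasurePreserving (T x) P P)
    (herg : ∀ A : Set Ω, MeasurableSet A →
      (∀ σ : Step d, T (vec σ) ⁻¹' A = A) → P A = 0 ∨ P A = 1)
    (F : Ω → Step d → ℝ) (hF : MemK d P T F)
    (α : ℝ) (hα : 0 < α)
    (hFmom : ∀ σ, Integrable (fun ω => |F ω σ| ^ ((d : ℝ) + α)) P)
    :
    ∀ᵐ ω ∂P, ∀ f : (Fin d → ℤ) → ℝ,
      f 0 = 0 → (∀ z σ, f (z + vec σ) = f z + F (T z ω) σ) →
      ∀ γ : ℝ, 2 * d < γ → γ < 2 * d + α / 2 →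
      ∃ c : ℝ≥0∞, c ≠ ⊤ ∧
        Tendsto (fun n : ℕ =>
          ∫⁻ x in {x : Fin d → ℝ | l1 x ≤ 1},
            ∫⁻ y in {y : Fin d → ℝ | l1 (y - x) ≤ 2 * d / n} ∩ {y : Fin d → ℝ | l1 y ≤ 1},
              ENNReal.ofReal
                (|gseq f n y - gseq f n x| ^ ((d : ℝ) + α / 2) / l1 (y - x) ^ γ))
          atTop (nhds c) :=
  statement7_general d hd P T hTmp F hF α hα hFmom

end RWRE7
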